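/- arXiv:1403.4886 — 6 statements merged into one kernel-verified Lean document; each statement's English description precedes it below -/
import Mathlib

section
/- For the metric function f(r) = r²/L² − 8πM*/r + 4πQ*²/r², the black hole is extremal (f has a double root at some r_h > 0) if and only if Q*⁶ = (27/4)π M*⁴ L². -/
open Real

/-!
Clearing denominators, `f(r) = 0` and `f'(r) = 0` become two equations that are linear in `r⁴`
and `r`; solving them gives `r³ = 2π M* L²` and `r⁴ = (4/3)π Q*² L²`. A positive `r` with
prescribed `r³ = a > 0` and `r⁴ = b` exists exactly when `a⁴ = b³`, which is the stated relation
after cancelling `π³ L⁶`.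
-/

noncomputable def metricFn (L M Q r : ℝ) : ℝ := r^2/L^2 - 8*π*M/r + 4*π*Q^2/r^2

theorem hasDerivAt_metricFn (L M Q : ℝ) {r : ℝ} (hr : r ≠ 0) :
    HasDerivAt (metricFn L M Q) (2*r/L^2 + 8*π*M/r^2 - 8*π*Q^2/r^3) r := by
  have h : HasDerivAt (fun x => x^2/L^2 - 8*π*M * x⁻¹ + 4*π*Q^2 * (x^2)⁻¹) _ r :=
    (((hasDerivAt_pow 2 r).div_const (L^2)).sub ((hasDerivAt_inv hr).const_mul (8*π*M))).add
      (((hasDerivAt_pow 2 r).inv (pow_ne_zero 2 hr)).const_mul (4*π*Q^2))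
  convert h using 1
  · funext x; simp only [metricFn, div_eq_mul_inv]
  · field_simp; ring

theorem metricFn_eq_zero_and_deriv_eq_zero_iff {L M Q r : ℝ} (hL : L ≠ 0) (hr : r ≠ 0) :
    metricFn L M Q r = 0 ∧ deriv (metricFn L M Q) r = 0 ↔
      r^3 = 2*π*M*L^2 ∧ r^4 = 4/3*π*Q^2*L^2 := by
  rw [(hasDerivAt_metricFn L M Q hr).deriv]
  have hf : metricFn L M Q r = 0 ↔ r^4 - 8*π*M*L^2*r + 4*π*Q^2*L^2 = 0 := by
    rw [← mul_eq_zero_iff_right (by positivity : r^2 * L^2 ≠ 0)]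
    unfold metricFn
    field_simp
  have hf' : 2*r/L^2 + 8*π*M/r^2 - 8*π*Q^2/r^3 = 0 ↔
      2*r^4 + 8*π*M*L^2*r - 8*π*Q^2*L^2 = 0 := by
    rw [← mul_eq_zero_iff_right (by positivity : r^3 * L^2 ≠ 0)]
    field_simp
  rw [hf, hf']
  constructor
  · rintro ⟨h0, h1⟩
    have h3 : r^3 = 2*π*M*L^2 :=
      mul_left_cancel₀ hr (by linear_combination (h1 + 2*h0) / 4)
    exact ⟨h3, by linear_combination (4*r*h3 - h0) / 3⟩
  · rintro ⟨h3, h4⟩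
    exact ⟨by linear_combination 4*r*h3 - 3*h4, by linear_combination -(4*r*h3) + 6*h4⟩

theorem exists_pos_pow_three_eq_and_pow_four_eq_iff {a b : ℝ} (ha : 0 < a) :
    (∃ r : ℝ, 0 < r ∧ r^3 = a ∧ r^4 = b) ↔ a^4 = b^3 := by
  constructor
  · rintro ⟨r, -, rfl, rfl⟩
    ring
  · intro h
    have hb : 0 ≤ b := (Odd.pow_nonneg_iff (n := 3) (by decide)).mp (by rw [← h]; positivity)
    set r : ℝ := a ^ ((3 : ℕ)⁻¹ : ℝ)
    have h3 : r^3 = a := rpow_inv_natCast_pow ha.le (by norm_num)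
    refine ⟨r, by positivity, h3, ?_⟩
    refine (pow_left_inj₀ (by positivity) hb (by norm_num : 3 ≠ 0)).mp ?_
    rw [← h, ← h3]
    ring

theorem stmt0_general (L Ms Qs : ℝ) (hL : 0 < L) (hM : 0 < Ms) :
    (∃ rh : ℝ, 0 < rh ∧
      (rh^2/L^2 - 8*π*Ms/rh + 4*π*Qs^2/rh^2 = 0) ∧
      deriv (fun r : ℝ => r^2/L^2 - 8*π*Ms/r + 4*π*Qs^2/r^2) rh = 0) ↔
    Qs^6 = (27/4)*π*Ms^4*L^2 := by
  have hπL : π^3 * L^6 ≠ 0 := by positivity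
  calc (∃ rh : ℝ, 0 < rh ∧ metricFn L Ms Qs rh = 0 ∧ deriv (metricFn L Ms Qs) rh = 0)
      ↔ ∃ rh : ℝ, 0 < rh ∧ rh^3 = 2*π*Ms*L^2 ∧ rh^4 = 4/3*π*Qs^2*L^2 :=
        exists_congr fun rh => and_congr_right fun hrh =>
          metricFn_eq_zero_and_deriv_eq_zero_iff hL.ne' hrh.ne'
    _ ↔ (2*π*Ms*L^2)^4 = (4/3*π*Qs^2*L^2)^3 :=
        exists_pos_pow_three_eq_and_pow_four_eq_iff (by positivity)
    _ ↔ Qs^6 = (27/4)*π*Ms^4*L^2 := by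
        constructor
        · intro h
          exact mul_left_cancel₀ hπL (by linear_combination -(27/64) * h)
        · intro h
          linear_combination -(64/27) * π^3 * L^6 * h

/-- Extremality (double root of the metric function f) iff Q*⁶ = (27/4)π M*⁴ L². -/
theorem stmt0 (L Ms Qs : ℝ) (hL : 0 < L) (hM : 0 < Ms) (hQ : 0 < Qs) :
    (∃ rh : ℝ, 0 < rh ∧
      (rh^2/L^2 - 8*π*Ms/rh + 4*π*Qs^2/rh^2 = 0) ∧
      deriv (fun r : ℝ => r^2/L^2 - 8*π*Ms/r + 4*π*Qs^2/r^2) rh = 0) ↔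
    Qs^6 = (27/4)*π*Ms^4*L^2 :=
  stmt0_general L Ms Qs hL hM
end

section
/- If f(r) = r²/L² − 8πM*/r + 4πQ*²/r² has a double root at r_h > 0 (extremal case), then the Kretschmann scalar expression 8(96π²L⁴M*²r² − 192π²L⁴M*Q*²r + 112π²L⁴Q*⁴ + 3r⁸)/(r⁸L⁴) evaluated at r = r_h equals 144/L⁴. -/
/-!
Writing `m = π M* r_h L²` and `q = π Q*² L²`, the conditions `f(r_h) = 0` and `f'(r_h) = 0`
become, after clearing denominators, the linear system `r_h⁴ - 8m + 4q = 0`,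
`2r_h⁴ + 8m - 8q = 0`, so `m = r_h⁴/2` and `q = 3r_h⁴/4`. Substituting these into the numerator
of the Kretschmann scalar collapses it to `18 r_h⁸`, giving `8 · 18 / L⁴ = 144 / L⁴`.
-/

open Real

theorem hasDerivAt_horizon (L M Q : ℝ) {r : ℝ} (hr : r ≠ 0) :
    HasDerivAt (fun r : ℝ => r^2/L^2 - 8*π*M/r + 4*π*Q^2/r^2)
      (2*r/L^2 + 8*π*M/r^2 - 8*π*Q^2/r^3) r := by
  have h := (((hasDerivAt_pow 2 r).div_const (L^2)).fun_sub
    ((hasDerivAt_inv hr).const_mul (8*π*M))).fun_add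
    (((hasDerivAt_pow 2 r).fun_inv (pow_ne_zero 2 hr)).const_mul (4*π*Q^2))
  simp only [← div_eq_mul_inv] at h
  exact h.congr_deriv (by field_simp; ring)

theorem mass_charge_of_double_root {L M Q r : ℝ} (hL : L ≠ 0) (hr : r ≠ 0)
    (h0 : r^2/L^2 - 8*π*M/r + 4*π*Q^2/r^2 = 0)
    (h1 : 2*r/L^2 + 8*π*M/r^2 - 8*π*Q^2/r^3 = 0) :
    π*M*r*L^2 = r^4/2 ∧ π*Q^2*L^2 = 3*r^4/4 := by
  have e0 : r^4 - 8*π*M*r*L^2 + 4*π*Q^2*L^2 = 0 := by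
    field_simp at h0
    linear_combination h0
  have e1 : 2*r^4 + 8*π*M*r*L^2 - 8*π*Q^2*L^2 = 0 := by
    field_simp at h1
    linear_combination h1
  exact ⟨by linear_combination (-1/4 : ℝ) * e0 - (1/8 : ℝ) * e1,
    by linear_combination (-1/4 : ℝ) * e0 - (1/4 : ℝ) * e1⟩

theorem kretschmann_eq_of_mass_charge {L M Q r : ℝ} (hL : L ≠ 0) (hr : r ≠ 0)
    (hM : π*M*r*L^2 = r^4/2) (hQ : π*Q^2*L^2 = 3*r^4/4) :
    8*(96*π^2*L^4*M^2*r^2 - 192*π^2*L^4*M*Q^2*r + 112*π^2*L^4*Q^4 + 3*r^8)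
      / (r^8*L^4) = 144/L^4 := by
  have hnum : 96*π^2*L^4*M^2*r^2 - 192*π^2*L^4*M*Q^2*r + 112*π^2*L^4*Q^4 + 3*r^8
      = 18*r^8 := by
    linear_combination (96*(π*M*r*L^2) + 48*r^4 - 192*(π*Q^2*L^2))*hM
      + (112*(π*Q^2*L^2) - 12*r^4)*hQ
  rw [hnum]
  field_simp
  ring

theorem stmt1_general (L Ms Qs rh : ℝ) (hL : 0 < L) (hr : 0 < rh)
    (h0 : rh^2/L^2 - 8*π*Ms/rh + 4*π*Qs^2/rh^2 = 0)
    (h1 : deriv (fun r : ℝ => r^2/L^2 - 8*π*Ms/r + 4*π*Qs^2/r^2) rh = 0) :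
    8*(96*π^2*L^4*Ms^2*rh^2 - 192*π^2*L^4*Ms*Qs^2*rh + 112*π^2*L^4*Qs^4 + 3*rh^8)
      / (rh^8*L^4) = 144/L^4 := by
  rw [(hasDerivAt_horizon L Ms Qs hr.ne').deriv] at h1
  obtain ⟨hMr, hQr⟩ := mass_charge_of_double_root hL.ne' hr.ne' h0 h1
  exact kretschmann_eq_of_mass_charge hL.ne' hr.ne' hMr hQr

/-- At an extremal (double) horizon root, the Kretschmann scalar equals 144/L⁴. -/
theorem stmt1 (L Ms Qs rh : ℝ) (hL : 0 < L) (hM : 0 < Ms) (hQ : 0 < Qs) (hr : 0 < rh)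
    (h0 : rh^2/L^2 - 8*π*Ms/rh + 4*π*Qs^2/rh^2 = 0)
    (h1 : deriv (fun r : ℝ => r^2/L^2 - 8*π*Ms/r + 4*π*Qs^2/r^2) rh = 0) :
    8*(96*π^2*L^4*Ms^2*rh^2 - 192*π^2*L^4*Ms*Qs^2*rh + 112*π^2*L^4*Qs^4 + 3*rh^8)
      / (rh^8*L^4) = 144/L^4 :=
  stmt1_general L Ms Qs rh hL hr h0 h1
end

section
/- The maximal proper infall time from horizon to singularity for a neutral toral AdS black hole, τ_max = ∫₀^{r_h} (2M/(πK²r) − r²/L²)^{−1/2} dr with r_h = (2ML²/(πK²))^{1/3}, equals πL/3, independent of M and K. -/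
/-!
With `r_h³ = 2ML²/(πK²)` the integrand is `L · √(r / (r_h³ - r³))`, the derivative of
`(2L/3) · arcsin √(r³/r_h³)`. Since this derivative is nonnegative and the antiderivative is
continuous on `[0, r_h]`, the integrand is integrable there, and the fundamental theorem of
calculus gives `(2L/3) · arcsin 1 = πL/3`.
-/

open Real Set MeasureTheory

theorem integrableOn_Ioo_and_integral_eq_sub_of_hasDerivAt_of_nonneg {g g' : ℝ → ℝ} {a b : ℝ}
    (hab : a ≤ b) (hcont : ContinuousOn g (Icc a b))
    (hderiv : ∀ x ∈ Ioo a b, HasDerivAt g (g' x) x) (hpos : ∀ x ∈ Ioo a b, 0 ≤ g' x) :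
    IntegrableOn g' (Ioo a b) ∧ ∫ x in Ioo a b, g' x = g b - g a := by
  have hint : IntegrableOn g' (Ioc a b) :=
    intervalIntegral.integrableOn_deriv_of_nonneg hcont hderiv hpos
  refine ⟨hint.mono_set Ioo_subset_Ioc_self, ?_⟩
  rw [← integral_Ioc_eq_integral_Ioo, ← intervalIntegral.integral_of_le hab]
  exact intervalIntegral.integral_eq_sub_of_hasDerivAt_of_le hab hcont hderiv
    ((intervalIntegrable_iff_integrableOn_Ioc_of_le hab).2 hint)

theorem sqrt_one_sub_cube_div_mul_sqrt_cube_div {r R : ℝ} (hr : 0 < r) (hR : 0 < R) :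
    √(1 - r ^ 3 / R ^ 3) * √(r ^ 3 / R ^ 3) = r ^ 2 / R ^ 3 * √((R ^ 3 - r ^ 3) / r) := by
  rw [← sqrt_mul' _ (by positivity),
    show (1 - r ^ 3 / R ^ 3) * (r ^ 3 / R ^ 3) = (r ^ 2 / R ^ 3) ^ 2 * ((R ^ 3 - r ^ 3) / r) by
      field_simp,
    sqrt_mul (by positivity), sqrt_sq (by positivity)]

theorem hasDerivAt_arcsin_sqrt_cube_div {r R : ℝ} (hr : 0 < r) (hrR : r < R) :
    HasDerivAt (fun x => 2 / 3 * arcsin √(x ^ 3 / R ^ 3)) (√((R ^ 3 - r ^ 3) / r))⁻¹ r := by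
  have hR : 0 < R := hr.trans hrR
  have hs0 : 0 < r ^ 3 / R ^ 3 := by positivity
  have hs1 : r ^ 3 / R ^ 3 < 1 := (div_lt_one (by positivity)).2 (by gcongr)
  have hsqrt1 : √(r ^ 3 / R ^ 3) < 1 := by simpa using sqrt_lt_sqrt hs0.le hs1
  have hcube : HasDerivAt (fun x => x ^ 3 / R ^ 3) (3 * r ^ 2 / R ^ 3) r := by
    simpa using (hasDerivAt_pow 3 r).div_const (R ^ 3)
  refine (((hasDerivAt_arcsin (by linarith [sqrt_nonneg (r ^ 3 / R ^ 3)]) hsqrt1.ne).comp r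
    (hcube.sqrt hs0.ne')).const_mul (2 / 3)).congr_deriv ?_
  rw [sq_sqrt hs0.le]
  calc _ = r ^ 2 / R ^ 3 / (√(1 - r ^ 3 / R ^ 3) * √(r ^ 3 / R ^ 3)) := by field_simp
    _ = _ := by rw [sqrt_one_sub_cube_div_mul_sqrt_cube_div hr hR]; field_simp

theorem integrableOn_and_integral_inv_sqrt_sub_cube_div {R : ℝ} (hR : 0 < R) :
    IntegrableOn (fun r => (√((R ^ 3 - r ^ 3) / r))⁻¹) (Ioo 0 R) ∧
      ∫ r in Ioo 0 R, (√((R ^ 3 - r ^ 3) / r))⁻¹ = π / 3 := by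
  have hcont : ContinuousOn (fun x => 2 / 3 * arcsin √(x ^ 3 / R ^ 3)) (Icc 0 R) := by
    fun_prop
  convert integrableOn_Ioo_and_integral_eq_sub_of_hasDerivAt_of_nonneg hR.le hcont
    (fun r hr => hasDerivAt_arcsin_sqrt_cube_div hr.1 hr.2) (fun r _ => by positivity) using 2
  simp [hR.ne']

-- Also true at `r = 0`, where both sides are `0` because `x / 0 = 0`.
theorem div_sub_sq_div_sq_eq_sub_cube_div_div_sq (c r L : ℝ) (hL : L ≠ 0) :
    c / r - r ^ 2 / L ^ 2 = (c * L ^ 2 - r ^ 3) / r / L ^ 2 := by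
  rcases eq_or_ne r 0 with rfl | hr
  · simp
  · field_simp

/-- Maximal infall time from horizon to singularity for a neutral toral AdS black hole
    equals πL/3, independent of M and K. -/
theorem stmt6 (M K L : ℝ) (hM : 0 < M) (hK : 0 < K) (hL : 0 < L) :
    let rh := (2*M*L^2/(π*K^2)) ^ ((1:ℝ)/3)
    MeasureTheory.IntegrableOn
      (fun r : ℝ => (Real.sqrt (2*M/(π*K^2*r) - r^2/L^2))⁻¹) (Set.Ioo 0 rh) ∧
    ∫ r in Set.Ioo (0:ℝ) rh, (Real.sqrt (2*M/(π*K^2*r) - r^2/L^2))⁻¹ = π*L/3 := by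
  intro rh
  have hc : 0 < 2 * M * L ^ 2 / (π * K ^ 2) := by positivity
  have hrh : rh ^ 3 = 2 * M * L ^ 2 / (π * K ^ 2) := by
    have : rh = (2 * M * L ^ 2 / (π * K ^ 2)) ^ ((3 : ℕ) : ℝ)⁻¹ := by norm_num [rh]
    rw [this, rpow_inv_natCast_pow hc.le three_ne_zero]
  have hf : (fun r : ℝ => (√(2*M/(π*K^2*r) - r^2/L^2))⁻¹)
      = fun r => L * (√((rh ^ 3 - r ^ 3) / r))⁻¹ := by
    ext r
    rw [← div_div, div_sub_sq_div_sq_eq_sub_cube_div_div_sq _ _ _ hL.ne',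
      sqrt_div' _ (by positivity), sqrt_sq hL.le, hrh, inv_div, div_eq_mul_inv]
    congr 3
    field_simp
  obtain ⟨hint, hval⟩ :=
    integrableOn_and_integral_inv_sqrt_sub_cube_div (rpow_pos_of_pos hc _ : 0 < rh)
  rw [hf]
  exact ⟨hint.const_mul L, by rw [integral_const_mul, hval]; ring⟩
end

section
/- At fixed charge Q, for a toral AdS black hole the time derivatives satisfy dT/dt = ħ·(3/(2γ−1))·(1/(2π²K²r_h²))·dM/dt, where r_h³ = γML²/(πK²); hence for γ ∈ (1/2, 2] and dM/dt < 0, dT/dt < 0, so the specific heat dM/dT is positive. -/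
/-!
Substituting `M = π K² r³ / (γ L²)` turns the temperature into `T = ħ r (2γ - 1) / (2π γ L²)`,
so `ħ / (2π² T K² r) = γ L² / (π K² r² (2γ - 1))`. Differentiating `T` along the flow and
eliminating `dr/dt` through the given relation leaves `dT/dt` as a positive multiple of `dM/dt`
once `γ > 1/2`.
-/

open Real

noncomputable def hawkingTemp (ħ L K r M : ℝ) : ℝ :=
  ħ * (r / (π * L ^ 2) - M / (2 * π ^ 2 * K ^ 2 * r ^ 2))

section

variable {ħ L K : ℝ}

theorem mass_eq_of_cube_eq {r M γ : ℝ} (hL : L ≠ 0) (hK : K ≠ 0) (hγ : γ ≠ 0)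
    (hcube : r ^ 3 = γ * M * L ^ 2 / (π * K ^ 2)) :
    M = π * K ^ 2 * r ^ 3 / (γ * L ^ 2) := by
  rw [hcube]
  field_simp

theorem hawkingTemp_eq_of_cube_eq {r M γ : ℝ} (hL : L ≠ 0) (hK : K ≠ 0) (hγ : γ ≠ 0)
    (hcube : r ^ 3 = γ * M * L ^ 2 / (π * K ^ 2)) :
    hawkingTemp ħ L K r M = ħ * r * (2 * γ - 1) / (2 * π * γ * L ^ 2) := by
  rw [hawkingTemp, mass_eq_of_cube_eq hL hK hγ hcube]
  field_simp

theorem HasDerivAt.hawkingTemp {r M : ℝ → ℝ} {r' M' t : ℝ} (hr : HasDerivAt r r' t)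
    (hM : HasDerivAt M M' t) (hK : K ≠ 0) (hr0 : r t ≠ 0) :
    HasDerivAt (fun s => hawkingTemp ħ L K (r s) (M s))
      (ħ * (r' / (π * L ^ 2) - M' / (2 * π ^ 2 * K ^ 2 * r t ^ 2)
        + M t * r' / (π ^ 2 * K ^ 2 * r t ^ 3))) t := by
  have hden : HasDerivAt (fun s => 2 * π ^ 2 * K ^ 2 * r s ^ 2)
      (2 * π ^ 2 * K ^ 2 * (2 * r t * r')) t :=
    ((hr.pow 2).const_mul _).congr_deriv (by push_cast; ring)
  refine (((hr.div_const _).sub (hM.div hden (by positivity))).const_mul ħ).congr_deriv ?_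
  field_simp
  ring

theorem hawkingTemp_deriv_eq_mul_deriv_mass {r M γ r' M' : ℝ} (hħ : ħ ≠ 0) (hL : L ≠ 0)
    (hK : K ≠ 0) (hγ : γ ≠ 0) (hγ' : 2 * γ - 1 ≠ 0)
    (hcube : r ^ 3 = γ * M * L ^ 2 / (π * K ^ 2))
    (hr' : r' = ħ / (2 * π ^ 2 * hawkingTemp ħ L K r M * K ^ 2 * r) * M') :
    ħ * (r' / (π * L ^ 2) - M' / (2 * π ^ 2 * K ^ 2 * r ^ 2) + M * r' / (π ^ 2 * K ^ 2 * r ^ 3))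
      = ħ * (3 / (2 * γ - 1)) * (1 / (2 * π ^ 2 * K ^ 2 * r ^ 2)) * M' := by
  rw [hr', hawkingTemp_eq_of_cube_eq hL hK hγ hcube, mass_eq_of_cube_eq hL hK hγ hcube]
  field_simp
  ring

end

theorem stmt11_general (L K hbar : ℝ) (hL : 0 < L) (hK : 0 < K) (hhbar : 0 < hbar)
    (M rh T γ : ℝ → ℝ)
    (hMd : Differentiable ℝ M) (hrd : Differentiable ℝ rh)
    (hrpos : ∀ t, 0 < rh t)
    (hT : ∀ t, T t = hbar*(rh t/(π*L^2) - M t/(2*π^2*K^2*(rh t)^2)))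
    (hγ : ∀ t, (rh t)^3 = γ t * M t * L^2/(π*K^2))
    (hγr : ∀ t, γ t ∈ Set.Ioc (1/2:ℝ) 2)
    (hdr : ∀ t, deriv rh t = hbar/(2*π^2*(T t)*K^2*(rh t)) * deriv M t) :
    ∀ t, deriv T t = hbar*(3/(2*γ t - 1))*(1/(2*π^2*K^2*(rh t)^2))*deriv M t ∧
      (deriv M t < 0 → deriv T t < 0) := by
  intro t
  have hT_eq : T = fun s => hawkingTemp hbar L K (rh s) (M s) := funext hT
  have hγ_pos : 0 < 2 * γ t - 1 := by linarith [(hγr t).1]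
  have hderiv : deriv T t = _ := hT_eq ▸
    ((hrd t).hasDerivAt.hawkingTemp (hMd t).hasDerivAt hK.ne' (hrpos t).ne').deriv
  rw [hderiv, hawkingTemp_deriv_eq_mul_deriv_mass hhbar.ne' hL.ne' hK.ne'
    (by linarith) hγ_pos.ne' (hγ t) (by rw [hdr t, hT t, hawkingTemp])]
  have hcoeff : 0 < hbar * (3 / (2 * γ t - 1)) * (1 / (2 * π ^ 2 * K ^ 2 * rh t ^ 2)) := by
    have := hrpos t
    positivity
  exact ⟨rfl, mul_neg_of_pos_of_neg hcoeff⟩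

/-- At fixed charge, dT/dt = hbar(3/(2γ−1))(1/(2π²K²r_h²)) dM/dt; hence dT/dt < 0 when
    dM/dt < 0, so the specific heat is positive. -/
theorem stmt11 (Q L K hbar : ℝ) (hQ : 0 < Q) (hL : 0 < L) (hK : 0 < K) (hhbar : 0 < hbar)
    (M rh T γ : ℝ → ℝ)
    (hMd : Differentiable ℝ M) (hrd : Differentiable ℝ rh)
    (hMpos : ∀ t, 0 < M t) (hrpos : ∀ t, 0 < rh t)
    (hhor : ∀ t, (rh t)^2/L^2 - 2*M t/(π*K^2*rh t) + Q^2/(4*π^3*K^4*(rh t)^2) = 0)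
    (hT : ∀ t, T t = hbar*(rh t/(π*L^2) - M t/(2*π^2*K^2*(rh t)^2)))
    (hγ : ∀ t, (rh t)^3 = γ t * M t * L^2/(π*K^2))
    (hγr : ∀ t, γ t ∈ Set.Ioc (1/2:ℝ) 2)
    (hTpos : ∀ t, 0 < T t)
    (hdr : ∀ t, deriv rh t = hbar/(2*π^2*(T t)*K^2*(rh t)) * deriv M t) :
    ∀ t, deriv T t = hbar*(3/(2*γ t - 1))*(1/(2*π^2*K^2*(rh t)^2))*deriv M t ∧
      (deriv M t < 0 → deriv T t < 0) :=
  stmt11_general L K hbar hL hK hhbar M rh T γ hMd hrd hrpos hT hγ hγr hdr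
end

section
/- For a toral AdS black hole with black hole phase existence requiring T ≥ T_c = ħ/(2πKL), parameterizing r_h³ = γML²/(πK²), the condition T ≥ T_c is equivalent to M ≥ 8πLγ²/(K(4γ−2)³) (for γ ∈ (1/2, 2]). -/
/-!
Eliminating `M` through `r_h³ = γ M L² / (π K²)` turns the temperature into
`T = ħ (2γ - 1) r_h / (2π γ L²)`, which is linear in `r_h` with a positive slope when `γ > 1/2`,
and `T_c` is the same line evaluated at `r_c = γ L / ((2γ - 1) K)`. Hence `T ≥ T_c` iff
`r_h ≥ r_c`, iff `r_h³ ≥ r_c³`, and the last inequality is `M ≥ π L γ² / (K (2γ - 1)³)`.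
-/

open Real

lemma rpow_one_third_pow_three {y : ℝ} (hy : 0 ≤ y) : (y ^ ((1 : ℝ) / 3)) ^ 3 = y := by
  rw [one_div, ← Nat.cast_ofNat, rpow_inv_natCast_pow hy three_ne_zero]

lemma hawkingTemperature_eq_of_horizon_cube {hbar L K M γ r : ℝ} (hL : L ≠ 0) (hK : K ≠ 0)
    (hγ : γ ≠ 0) (hr : r ≠ 0) (hr3 : r ^ 3 = γ * M * L ^ 2 / (π * K ^ 2)) :
    hbar * (r / (π * L ^ 2) - M / (2 * π ^ 2 * K ^ 2 * r ^ 2)) =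
      hbar * (2 * γ - 1) / (2 * π * γ * L ^ 2) * r := by
  have hM : M = π * K ^ 2 * r ^ 3 / (γ * L ^ 2) := by
    rw [hr3]; field_simp
  subst hM
  field_simp

lemma criticalTemperature_eq {hbar L K γ : ℝ} (hL : L ≠ 0) (hK : K ≠ 0) (hγ : γ ≠ 0)
    (hγ' : 2 * γ - 1 ≠ 0) :
    hbar / (2 * π * K * L) =
      hbar * (2 * γ - 1) / (2 * π * γ * L ^ 2) * (γ * L / ((2 * γ - 1) * K)) := by
  field_simp

lemma criticalRadius_cube_le_iff {L K M γ : ℝ} (hL : 0 < L) (hK : 0 < K) (hγ : 1 / 2 < γ) :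
    (γ * L / ((2 * γ - 1) * K)) ^ 3 ≤ γ * M * L ^ 2 / (π * K ^ 2) ↔
      8 * π * L * γ ^ 2 / (K * (4 * γ - 2) ^ 3) ≤ M := by
  have hγ0 : 0 < γ := by linarith
  have hγ1 : 0 < 2 * γ - 1 := by linarith
  have hk : 0 < π * K ^ 2 / (γ * L ^ 2) := by positivity
  have hthreshold : 8 * π * L * γ ^ 2 / (K * (4 * γ - 2) ^ 3) =
      π * K ^ 2 / (γ * L ^ 2) * (γ * L / ((2 * γ - 1) * K)) ^ 3 := by
    rw [show 4 * γ - 2 = 2 * (2 * γ - 1) by ring]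
    field_simp
    ring
  have hcube : γ * M * L ^ 2 / (π * K ^ 2) = M / (π * K ^ 2 / (γ * L ^ 2)) := by
    field_simp
  rw [hthreshold, hcube, le_div_iff₀' hk]

/-- Existence of the black-hole phase (T ≥ T_c) is equivalent to M ≥ 8πLγ²/(K(4γ−2)³). -/
theorem stmt12 (hbar L K M γ : ℝ) (hhbar : 0 < hbar) (hL : 0 < L) (hK : 0 < K) (hM : 0 < M)
    (hγ : γ ∈ Set.Ioc (1/2:ℝ) 2) :
    let rh := (γ*M*L^2/(π*K^2)) ^ ((1:ℝ)/3)
    let T := hbar*(rh/(π*L^2) - M/(2*π^2*K^2*rh^2))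
    let Tc := hbar/(2*π*K*L)
    (Tc ≤ T ↔ 8*π*L*γ^2/(K*(4*γ-2)^3) ≤ M) := by
  intro rh T Tc
  have hγ0 : 0 < γ := by linarith [hγ.1]
  have hγ1 : 0 < 2 * γ - 1 := by linarith [hγ.1]
  have hA : 0 < γ * M * L ^ 2 / (π * K ^ 2) := by positivity
  have hrh : 0 < rh := rpow_pos_of_pos hA _
  have hrh3 : rh ^ 3 = γ * M * L ^ 2 / (π * K ^ 2) := rpow_one_third_pow_three hA.le
  have hT : T = hbar * (2 * γ - 1) / (2 * π * γ * L ^ 2) * rh :=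
    hawkingTemperature_eq_of_horizon_cube hL.ne' hK.ne' hγ0.ne' hrh.ne' hrh3
  have hTc : Tc = hbar * (2 * γ - 1) / (2 * π * γ * L ^ 2) * (γ * L / ((2 * γ - 1) * K)) :=
    criticalTemperature_eq hL.ne' hK.ne' hγ0.ne' hγ1.ne'
  rw [hT, hTc, mul_le_mul_iff_right₀ (by positivity),
    ← pow_le_pow_iff_left₀ (by positivity) hrh.le three_ne_zero, hrh3]
  exact criticalRadius_cube_le_iff hL hK hγ.1
end

section
/- For the potential V(r) = (J²/r²)·(r²/L² − 8M*/r + 4πQ*²/r²) governing null geodesics outside a flat AdS black hole, V is monotonically increasing on (r_h, ∞) toward its asymptotic value J²/L², provided r_h > 0 is the largest root of f(r) = r²/L² − 8M*/r + 4πQ*²/r²; equivalently V(r) < J²/L² for all r > r_h and V(r) → J²/L² as r → ∞. -/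
open Real

set_option maxHeartbeats 1000000 in
/-- Outside the (largest-root) horizon, the null-geodesic potential V = J²f/r² is below
    its asymptotic value J²/L², is increasing, and tends to J²/L². -/
theorem stmt16 (J L Ms Qs rh : ℝ) (hJ : J ≠ 0) (hL : 0 < L) (hM : 0 < Ms) (hQ : 0 < Qs)
    (hr : 0 < rh)
    (hroot : rh^2/L^2 - 8*Ms/rh + 4*π*Qs^2/rh^2 = 0)
    (hlargest : ∀ r : ℝ, 0 < r → r^2/L^2 - 8*Ms/r + 4*π*Qs^2/r^2 = 0 → r ≤ rh) :
    let V := fun r : ℝ => J^2 * (r^2/L^2 - 8*Ms/r + 4*π*Qs^2/r^2) / r^2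
    (∀ r ∈ Set.Ioi rh, V r < J^2/L^2) ∧
    StrictMonoOn V (Set.Ioi rh) ∧
    Filter.Tendsto V Filter.atTop (nhds (J^2/L^2)) := by
  intro V
  have hJ2 : 0 < J^2 := by positivity
  have hL2 : 0 < L^2 := by positivity
  have hrh2 : (0:ℝ) < rh^2 := by positivity
  -- root condition cleared of denominators : rh⁴/L² − 8 Ms rh + 4π Qs² = 0
  have key : rh^4/L^2 - 8*Ms*rh + 4*π*Qs^2 = 0 := by
    have h := hroot
    field_simp at h
    field_simp
    nlinarith [h]
  have hkeyL : rh^4 - 8*Ms*rh*L^2 + 4*π*Qs^2*L^2 = 0 := by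
    have h := key
    field_simp at h
    linarith
  -- rh³ ≥ 2 Ms L² since rh is the largest root
  have hcube : 2*Ms*L^2 ≤ rh^3 := by
    by_contra hcon
    push_neg at hcon
    obtain ⟨c, hc0, hc3⟩ : ∃ c : ℝ, 0 < c ∧ c^3 = 2*Ms*L^2 := by
      refine ⟨(2*Ms*L^2) ^ ((1:ℝ)/3), Real.rpow_pos_of_pos (by positivity) _, ?_⟩
      rw [← Real.rpow_natCast ((2*Ms*L^2) ^ ((1:ℝ)/3)) 3, ← Real.rpow_mul (by positivity)]
      norm_num
    have hrc : rh < c := by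
      by_contra hge
      push_neg at hge
      have : c^3 ≤ rh^3 := pow_le_pow_left₀ hc0.le hge 3
      linarith
    set p : ℝ → ℝ := fun r => r^4/L^2 - 8*Ms*r + 4*π*Qs^2 with hp
    have hpc : p c < 0 := by
      simp only [hp]
      have e1 : 8*Ms*L^2 = 4*c^3 := by linarith
      have e2 : 8*Ms*c*L^2 = 4*c^4 := by linear_combination c * e1
      have e4 : 8*Ms*rh*L^2 = 4*c^3*rh := by linear_combination rh * e1
      have hh : 0 < (c-rh)^2*(3*c^2+2*c*rh+rh^2) :=
        mul_pos (pow_pos (sub_pos.mpr hrc) 2) (by positivity)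
      have hnum : c^4 - 8*Ms*c*L^2 + 4*π*Qs^2*L^2 < 0 := by nlinarith [hh, e2, e4, hkeyL]
      have heq : c^4/L^2 - 8*Ms*c + 4*π*Qs^2
          = (c^4 - 8*Ms*c*L^2 + 4*π*Qs^2*L^2)/L^2 := by field_simp
      rw [heq]
      exact div_neg_of_neg_of_pos hnum hL2
    obtain ⟨R, hR1, hcR, hR3⟩ : ∃ R : ℝ, 1 ≤ R ∧ c ≤ R ∧ 8*Ms*L^2 < R^3 := by
      refine ⟨c + 8*Ms*L^2 + 1, by nlinarith, by nlinarith, ?_⟩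
      have hR1 : 1 ≤ c + 8*Ms*L^2 + 1 := by nlinarith
      have hRR : c + 8*Ms*L^2 + 1 ≤ (c + 8*Ms*L^2 + 1)^3 := by
        nlinarith [mul_nonneg (mul_nonneg (by linarith : (0:ℝ) ≤ c + 8*Ms*L^2 + 1)
          (by linarith : (0:ℝ) ≤ c + 8*Ms*L^2 + 1 - 1)) (by linarith : (0:ℝ) ≤ c + 8*Ms*L^2 + 1 + 1)]
      nlinarith
    have hpR : 0 < p R := by
      simp only [hp]
      have hRpos : 0 < R := by linarith
      have h2 : 8*Ms*R < R^4/L^2 := by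
        rw [lt_div_iff₀ hL2]; nlinarith [mul_pos hRpos (sub_pos.mpr hR3)]
      have hq : 0 < 4*π*Qs^2 := by positivity
      linarith
    have hcont : ContinuousOn p (Set.Icc c R) := by
      apply ContinuousOn.add
      apply ContinuousOn.sub
      · exact (continuousOn_pow 4).div_const _
      · exact (continuousOn_const.mul continuousOn_id)
      · exact continuousOn_const
    have hmem : (0:ℝ) ∈ Set.Icc (p c) (p R) := ⟨le_of_lt hpc, le_of_lt hpR⟩
    obtain ⟨r', hr'mem, hr'root⟩ := intermediate_value_Icc hcR hcont hmem
    have hr'pos : 0 < r' := lt_of_lt_of_le hc0 hr'mem.1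
    have hf : r'^2/L^2 - 8*Ms/r' + 4*π*Qs^2/r'^2 = 0 := by
      have hp0 : r'^4/L^2 - 8*Ms*r' + 4*π*Qs^2 = 0 := hr'root
      have heq : r'^2/L^2 - 8*Ms/r' + 4*π*Qs^2/r'^2
          = (r'^4/L^2 - 8*Ms*r' + 4*π*Qs^2)/r'^2 := by field_simp
      rw [heq, hp0, zero_div]
    have := hlargest r' hr'pos hf
    have : c ≤ rh := le_trans hr'mem.1 this
    linarith
  -- hence 4π Qs² ≤ 6 Ms rh
  have hQ6 : 4*π*Qs^2 ≤ 6*Ms*rh := by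
    have h' : 4*π*Qs^2*L^2 ≤ 6*Ms*rh*L^2 := by
      nlinarith [mul_le_mul_of_nonneg_right hcube hr.le]
    exact le_of_mul_le_mul_right (by linarith) hL2
  -- and 4π Qs² < 8 Ms rh
  have hQ8 : 4*π*Qs^2 < 8*Ms*rh := by
    have h' : 4*π*Qs^2*L^2 < 8*Ms*rh*L^2 := by nlinarith [pow_pos hr 4]
    exact lt_of_mul_lt_mul_right (by linarith) hL2.le
  refine ⟨?_, ?_, ?_⟩
  · -- V r < J²/L²
    intro r hrmem
    have hrr : rh < r := hrmem
    have hr0 : 0 < r := lt_trans hr hrr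
    have hid : V r - J^2/L^2 = J^2*(4*π*Qs^2 - 8*Ms*r)/r^4 := by
      simp only [V]
      field_simp
      ring
    have hneg : J^2*(4*π*Qs^2 - 8*Ms*r)/r^4 < 0 := by
      apply div_neg_of_neg_of_pos
      · apply mul_neg_of_pos_of_neg hJ2
        nlinarith [mul_lt_mul_of_pos_left hrr (by positivity : (0:ℝ) < 8*Ms)]
      · positivity
    linarith
  · -- strict monotonicity
    intro a ha b hb hab
    have ha0 : 0 < a := lt_trans hr ha
    have hb0 : 0 < b := lt_trans hr (lt_trans (Set.mem_Ioi.mp ha) hab)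
    have hid : V b - V a
        = J^2*(8*Ms*a*b*(b^3-a^3) - 4*π*Qs^2*(b^4-a^4))/(a^4*b^4) := by
      simp only [V]
      field_simp
      ring
    have hnum : 0 < 8*Ms*a*b*(b^3-a^3) - 4*π*Qs^2*(b^4-a^4) := by
      have hba : 0 < b^4 - a^4 := sub_pos.mpr (pow_lt_pow_left₀ hab ha0.le (by norm_num))
      have h1 : 4*π*Qs^2*(b^4-a^4) ≤ 6*Ms*rh*(b^4-a^4) :=
        mul_le_mul_of_nonneg_right hQ6 hba.le
      have h2 : 6*Ms*rh*(b^4-a^4) < 6*Ms*a*(b^4-a^4) :=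
        mul_lt_mul_of_pos_right
          ((mul_lt_mul_iff_right₀ (by positivity : (0:ℝ) < 6*Ms)).mpr ha) hba
      have h3 : 6*Ms*a*(b^4-a^4) ≤ 8*Ms*a*b*(b^3-a^3) := by
        nlinarith [mul_nonneg (mul_nonneg hM.le ha0.le)
          (mul_nonneg (sq_nonneg (b-a)) (by nlinarith : (0:ℝ) ≤ b^2+2*a*b+3*a^2))]
      linarith
    have : 0 < J^2*(8*Ms*a*b*(b^3-a^3) - 4*π*Qs^2*(b^4-a^4))/(a^4*b^4) := by positivity
    linarith
  · -- limit
    have t1 : Filter.Tendsto (fun r:ℝ => 8*J^2*Ms/r^3) Filter.atTop (nhds 0) :=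
      Filter.Tendsto.div_atTop tendsto_const_nhds (Filter.tendsto_pow_atTop (by norm_num))
    have t2 : Filter.Tendsto (fun r:ℝ => 4*π*J^2*Qs^2/r^4) Filter.atTop (nhds 0) :=
      Filter.Tendsto.div_atTop tendsto_const_nhds (Filter.tendsto_pow_atTop (by norm_num))
    have tW : Filter.Tendsto (fun r:ℝ => J^2/L^2 - 8*J^2*Ms/r^3 + 4*π*J^2*Qs^2/r^4)
        Filter.atTop (nhds (J^2/L^2)) := by
      have hc : Filter.Tendsto (fun _ : ℝ => J^2/L^2) Filter.atTop (nhds (J^2/L^2)) :=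
        tendsto_const_nhds
      have h := (hc.sub t1).add t2
      simpa using h
    apply tW.congr'
    filter_upwards [Filter.eventually_gt_atTop 0] with r hr0
    simp only [V]
    field_simp
end
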